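/- A sequence of integers (ℓ_0, h_1, ℓ_1, …, h_r, ℓ_r) is the profile of a Catalan word if and only if ℓ_0 = 0, ℓ_r = 0, ℓ_i ≥ 0 for 1 ≤ i ≤ r-1, ℓ_{i-1} < h_i for 1 ≤ i ≤ r, and h_i > ℓ_i for 1 ≤ i ≤ r; in that case the unique such word is w = x^{h_1} y^{h_1-ℓ_1} x^{h_2-ℓ_1} y^{h_2-ℓ_2} ⋯ x^{h_r-ℓ_{r-1}} y^{h_r} (exponents with respect to concatenation). -/

import Mathlib

open scoped Classical

inductive Letter | x | y
deriving DecidableEq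

instance : Fintype Letter := ⟨{Letter.x, Letter.y}, fun a => by cases a <;> simp⟩

/-- x ↦ 1, y ↦ -1 -/
def bar : Letter → ℤ
  | .x => 1
  | .y => -1

/-- σ swaps the letters x and y. -/
def sigma : Letter → Letter
  | .x => .y
  | .y => .x

/-- the pairing ⟨u,v⟩ : 2 if u = v, -2 otherwise. -/
def pair : Letter → Letter → ℤ := fun u v => if u = v then 2 else -2

noncomputable section

/-- The free associative algebra on the two letters x, y (with its word basis). -/
abbrev V (F : Type*) [Field F] := MonoidAlgebra F (FreeMonoid Letter)

variable {F : Type*} [Field F]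

/-- the basis word of V corresponding to a list of letters -/
def wd (w : List Letter) : V F := MonoidAlgebra.single (FreeMonoid.ofList w) 1

/-- the q-shuffle product of two words, by the left recursion -/
def shuffleWord (q : F) : List Letter → List Letter → V F
  | [], v => wd v
  | u1 :: ut, [] => wd (u1 :: ut)
  | u1 :: ut, v1 :: vt =>
      wd [u1] * shuffleWord q ut (v1 :: vt)
      + q ^ (((u1 :: ut).map (fun a => pair a v1)).sum) •
          (wd [v1] * shuffleWord q (u1 :: ut) vt)
termination_by u v => u.length + v.length

/-- the q-shuffle product on V, extended bilinearly -/
def shuffle (q : F) (a b : V F) : V F :=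
  a.coeff.sum fun u cu => b.coeff.sum fun v cv =>
    (cu * cv) • shuffleWord q (FreeMonoid.toList u) (FreeMonoid.toList v)

/-- the quantum integer [m]_q -/
def qint (q : F) (m : ℤ) : F := (q ^ m - q ^ (-m)) / (q - q⁻¹)

/-- the quantum factorial [m]_q! -/
def qfac (q : F) (m : ℤ) : F := ∏ j ∈ Finset.range m.toNat, qint q ((j : ℤ) + 1)

/-- e_i = ā_1 + ⋯ + ā_i, the i-th elevation of the word w -/
def esum (w : List Letter) (i : ℕ) : ℤ := ((w.take i).map bar).sum

/-- A word is Catalan when all partial sums of bar are nonnegative and the total is zero. -/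
def IsCatalan (w : List Letter) : Prop :=
  (∀ i, i ≤ w.length → 0 ≤ esum w i) ∧ esum w w.length = 0

/-- the coefficient C(w) = ∏_{i=0}^{2n} [1 + e_i]_q -/
def Ccoef (q : F) (w : List Letter) : F :=
  ∏ i ∈ Finset.range (w.length + 1), qint q (1 + esum w i)

/-- the n-th Catalan element C_n = ∑_{w ∈ Cat_n} C(w) w  -/
def catalanElt (q : F) (n : ℕ) : V F :=
  ∑ f : Fin (2 * n) → Letter,
    if IsCatalan (List.ofFn f) then Ccoef q (List.ofFn f) • wd (List.ofFn f) else 0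

/-- the antiautomorphism ζ : reverse the word and swap x,y, extended linearly -/
def zeta (a : V F) : V F :=
  a.coeff.sum fun w c =>
    MonoidAlgebra.single (FreeMonoid.ofList (((FreeMonoid.toList w).map sigma).reverse)) c

/-- The profile of a word: delete from the elevation sequence every interior e_i
    such that e_{i+1}-e_i and e_i-e_{i-1} have the same sign. -/
def profile (w : List Letter) : List ℤ :=
  (List.range (w.length + 1)).filterMap fun i =>
    if i = 0 ∨ i = w.length then some (esum w i)
    else if 0 < (esum w (i + 1) - esum w i) * (esum w i - esum w (i - 1)) then none
    else some (esum w i)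

/-- The list (ℓ_0, h_1, ℓ_1, h_2, …, h_r, ℓ_r). -/
def P (r : ℕ) (ℓ h : ℕ → ℤ) : List ℤ :=
  List.ofFn fun i : Fin (2 * r + 1) =>
    if i.val % 2 = 0 then ℓ (i.val / 2) else h ((i.val + 1) / 2)

/-- the word x^{h_1} y^{h_1-ℓ_1} x^{h_2-ℓ_1} y^{h_2-ℓ_2} ⋯ x^{h_r-ℓ_{r-1}} y^{h_r} -/
def explicitWord (r : ℕ) (ℓ h : ℕ → ℤ) : List Letter :=
  (List.range r).flatMap fun i =>
    List.replicate (h (i + 1) - ℓ i).toNat Letter.x ++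
      List.replicate (h (i + 1) - ℓ (i + 1)).toNat Letter.y

/-- C(ℓ_0,h_1,…,h_r,ℓ_r), the ratio of q-factorials attached to a profile. -/
def Cprof (q : F) (r : ℕ) (ℓ h : ℕ → ℤ) : F :=
  (∏ i ∈ Finset.Icc 1 r, qfac q (h i) * qfac q (h i + 1)) /
    (∏ i ∈ Finset.range (r + 1), qfac q (ℓ i) * qfac q (ℓ i + 1))

end

/-! A word that starts with `x` (or is empty) and, started at height `c`, stays nonnegative and
ends at `0` is either empty or splits into maximal runs as `x^a y^b u` with `a, b > 0`, where `u`
again starts with `x` or is empty and is such a word from height `c + a - b`. Its profile is then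
`c, c + a` followed by the profile of `u` shifted to start at `c + a - b`, so reading the
profile two entries at a time recovers the runs one by one: this gives uniqueness, the
constraints on `(ℓ_0, h_1, …, ℓ_r)` and, conversely, that `explicitWord` realises every
admissible sequence. -/

lemma esum_zero (w : List Letter) : esum w 0 = 0 := by simp [esum]

lemma esum_cons_succ (a : Letter) (w : List Letter) (i : ℕ) :
    esum (a :: w) (i + 1) = bar a + esum w i := by
  simp [esum]

def profileAt (w : List Letter) (i : ℕ) : Option ℤ :=
  if i = 0 ∨ i = w.length then some (esum w i)
  else if 0 < (esum w (i + 1) - esum w i) * (esum w i - esum w (i - 1)) then none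
  else some (esum w i)

lemma profile_eq_filterMap_profileAt (w : List Letter) :
    profile w = 0 :: (List.range w.length).filterMap (profileAt w ∘ Nat.succ) := by
  rw [profile, List.range_succ_eq_map, List.filterMap_cons_some (b := 0) (by simp [esum_zero]),
    List.filterMap_map]
  rfl

lemma head?_profile (w : List Letter) : (profile w).head? = some 0 := by
  rw [profile_eq_filterMap_profileAt]
  rfl

lemma profileAt_cons_one (a : Letter) (w : List Letter) :
    profileAt (a :: w) 1 = if w.head? = some a then none else some (bar a) := by
  rcases w with _ | ⟨b, t⟩
  · simp [profileAt, esum, bar]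
  · cases a <;> cases b <;> simp [profileAt, esum, bar]

lemma profileAt_cons_succ_succ (a : Letter) (w : List Letter) (j : ℕ) :
    profileAt (a :: w) (j + 2) = (profileAt w (j + 1)).map (bar a + ·) := by
  have hend : (j + 2 = 0 ∨ j + 2 = w.length + 1) ↔ (j + 1 = 0 ∨ j + 1 = w.length) := by omega
  simp only [profileAt, List.length_cons, hend, show j + 2 - 1 = j + 1 from rfl,
    show j + 1 + 1 = j + 2 from rfl, Nat.add_sub_cancel, esum_cons_succ, add_sub_add_left_eq_sub]
  split_ifs <;> rfl

lemma profile_nil : profile [] = [0] := by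
  simp [profile, esum]

lemma profile_cons (a : Letter) (w : List Letter) :
    profile (a :: w) =
      0 :: (if w.head? = some a then (profile w).tail else profile w).map (bar a + ·) := by
  rw [profile_eq_filterMap_profileAt, profile_eq_filterMap_profileAt, List.length_cons,
    List.range_succ_eq_map, List.filterMap_cons, List.filterMap_map]
  simp only [Function.comp_apply, Nat.succ_eq_add_one, zero_add, profileAt_cons_one, List.tail_cons]
  split_ifs <;> simp [List.map_filterMap, profileAt_cons_succ_succ]

lemma head?_replicate_append {a : ℕ} (ha : 0 < a) (c : Letter) (v : List Letter) :
    (List.replicate a c ++ v).head? = some c := by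
  obtain ⟨a, rfl⟩ := Nat.exists_eq_add_of_lt ha
  simp [List.replicate_succ]

lemma profile_replicate_append {c : Letter} {v : List Letter} (hv : v.head? ≠ some c)
    {a : ℕ} (ha : 0 < a) :
    profile (List.replicate a c ++ v) = 0 :: (profile v).map ((a : ℤ) * bar c + ·) := by
  induction a, ha using Nat.le_induction with
  | base => simp [profile_cons, hv]
  | succ a ha ih =>
    rw [List.replicate_succ, List.cons_append, profile_cons,
      if_pos (head?_replicate_append ha c v), ih]
    simp only [List.tail_cons, List.map_map, Function.comp_def, Nat.cast_succ]
    congr 2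
    funext t
    ring

lemma profile_xy_append {a b : ℕ} (ha : 0 < a) (hb : 0 < b) {u : List Letter}
    (hu : u.head? ≠ some Letter.y) :
    profile (List.replicate a Letter.x ++ (List.replicate b Letter.y ++ u)) =
      0 :: (a : ℤ) :: (profile u).map ((a - b : ℤ) + ·) := by
  rw [profile_replicate_append (by simp [head?_replicate_append hb]) ha,
    profile_replicate_append hu hb]
  simp only [bar, List.map_cons, List.map_map, Function.comp_def, mul_one, add_zero, mul_neg,
    ← add_assoc, ← sub_eq_add_neg]

def IsCatalanFrom (c : ℤ) (w : List Letter) : Prop :=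
  (∀ i, i ≤ w.length → 0 ≤ c + esum w i) ∧ c + esum w w.length = 0

lemma isCatalanFrom_zero {w : List Letter} : IsCatalanFrom 0 w ↔ IsCatalan w := by
  simp [IsCatalanFrom, IsCatalan]

lemma IsCatalanFrom.nonneg {c : ℤ} {w : List Letter} (hw : IsCatalanFrom c w) : 0 ≤ c := by
  simpa [esum_zero] using hw.1 0 (Nat.zero_le _)

lemma isCatalanFrom_nil {c : ℤ} : IsCatalanFrom c [] ↔ c = 0 := by
  simp only [IsCatalanFrom, List.length_nil, nonpos_iff_eq_zero, forall_eq, esum_zero, add_zero,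
    and_iff_right_iff_imp]
  exact le_of_eq ∘ Eq.symm

lemma isCatalanFrom_cons {c : ℤ} {a : Letter} {w : List Letter} :
    IsCatalanFrom c (a :: w) ↔ 0 ≤ c ∧ IsCatalanFrom (c + bar a) w := by
  simp only [IsCatalanFrom, List.length_cons, ← Nat.lt_add_one_iff, Nat.forall_lt_succ_left,
    esum_zero, add_zero, esum_cons_succ, ← add_assoc]
  tauto

lemma isCatalanFrom_replicate_x_append {c : ℤ} {a : ℕ} {w : List Letter} :
    IsCatalanFrom c (List.replicate a Letter.x ++ w) ↔ 0 ≤ c ∧ IsCatalanFrom (c + a) w := by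
  induction a generalizing c with
  | zero => simpa using fun hw => hw.nonneg
  | succ a ih =>
    rw [List.replicate_succ, List.cons_append, isCatalanFrom_cons, ih, bar, Nat.cast_succ,
      add_comm (a : ℤ), add_assoc]
    constructor
    · exact fun ⟨hc, _, hw⟩ => ⟨hc, hw⟩
    · exact fun ⟨hc, hw⟩ => ⟨hc, by omega, hw⟩

lemma isCatalanFrom_replicate_y_append {c : ℤ} {b : ℕ} {w : List Letter} :
    IsCatalanFrom c (List.replicate b Letter.y ++ w) ↔ IsCatalanFrom (c - b) w := by
  induction b generalizing c with
  | zero => simp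
  | succ b ih =>
    rw [List.replicate_succ, List.cons_append, isCatalanFrom_cons, ih, bar, Nat.cast_succ,
      ← sub_eq_add_neg, sub_sub, add_comm 1 (b : ℤ)]
    refine ⟨And.right, fun hw => ⟨?_, hw⟩⟩
    have := hw.nonneg
    omega

lemma isCatalanFrom_xy_append {c : ℤ} {a b : ℕ} {u : List Letter} :
    IsCatalanFrom c (List.replicate a Letter.x ++ (List.replicate b Letter.y ++ u)) ↔
      0 ≤ c ∧ IsCatalanFrom (c + a - b) u := by
  rw [isCatalanFrom_replicate_x_append, isCatalanFrom_replicate_y_append]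

lemma IsCatalan.head?_ne_y {w : List Letter} (hw : IsCatalan w) : w.head? ≠ some Letter.y := by
  rcases w with _ | ⟨_ | _, t⟩
  · simp
  · simp
  · have := (isCatalanFrom_cons.1 (isCatalanFrom_zero.2 hw)).2.nonneg
    simp [bar] at this

lemma exists_eq_replicate_append (c : Letter) (v : List Letter) :
    ∃ a u, v = List.replicate a c ++ u ∧ u.head? ≠ some c := by
  induction v with
  | nil => exact ⟨0, [], rfl, by simp⟩
  | cons d v ih =>
    by_cases hd : d = c
    · obtain ⟨a, u, rfl, hu⟩ := ih
      exact ⟨a + 1, u, by simp [hd, List.replicate_succ], hu⟩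
    · exact ⟨0, d :: v, rfl, by simpa using hd⟩

lemma eq_nil_of_head?_ne {w : List Letter} (hx : w.head? ≠ some Letter.x)
    (hy : w.head? ≠ some Letter.y) : w = [] := by
  rcases w with _ | ⟨_ | _, t⟩ <;> simp_all

lemma exists_eq_xy_append {c : ℤ} {v : List Letter} (hne : v ≠ [])
    (hv : v.head? ≠ some Letter.y) (hcat : IsCatalanFrom c v) :
    ∃ a b u, 0 < a ∧ 0 < b ∧ u.head? ≠ some Letter.y ∧
      v = List.replicate a Letter.x ++ (List.replicate b Letter.y ++ u) := by
  obtain ⟨a, w, rfl, hw⟩ := exists_eq_replicate_append Letter.x v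
  obtain ⟨b, u, rfl, hu⟩ := exists_eq_replicate_append Letter.y w
  refine ⟨a, b, u, Nat.pos_of_ne_zero fun ha => ?_, Nat.pos_of_ne_zero fun hb => ?_, hu, rfl⟩
  · subst ha
    obtain rfl : b = 0 := by
      by_contra hb
      exact hv (head?_replicate_append (Nat.pos_of_ne_zero hb) _ _)
    exact hne (eq_nil_of_head?_ne hw hu)
  · subst hb
    obtain rfl := eq_nil_of_head?_ne hw hu
    obtain ⟨hc, hend⟩ := isCatalanFrom_xy_append.1 hcat
    have : 0 < a := Nat.pos_of_ne_zero (by rintro rfl; simp at hne)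
    rw [isCatalanFrom_nil] at hend
    omega

lemma P_zero (ℓ h : ℕ → ℤ) : P 0 ℓ h = [ℓ 0] := rfl

lemma P_succ (r : ℕ) (ℓ h : ℕ → ℤ) :
    P (r + 1) ℓ h = ℓ 0 :: h 1 :: P r (fun i => ℓ (i + 1)) (fun i => h (i + 1)) := by
  simp only [P, List.ofFn_succ]
  simp [show ∀ i : ℕ, i + 1 + 1 + 1 = (i + 1) + 2 from fun _ => rfl,
    Nat.mod_eq_of_lt (show 1 < 2 * (r + 1) + 1 by omega),
    Nat.mod_eq_of_lt (show 2 < 2 * (r + 1) + 1 by omega)]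

lemma head?_P (r : ℕ) (ℓ h : ℕ → ℤ) : (P r ℓ h).head? = some (ℓ 0) := by
  cases r
  · rfl
  · rw [P_succ]
    rfl

lemma explicitWord_succ (r : ℕ) (ℓ h : ℕ → ℤ) :
    explicitWord (r + 1) ℓ h =
      List.replicate (h 1 - ℓ 0).toNat Letter.x ++
        (List.replicate (h 1 - ℓ 1).toNat Letter.y ++
          explicitWord r (fun i => ℓ (i + 1)) (fun i => h (i + 1))) := by
  rw [explicitWord, List.range_succ_eq_map, List.flatMap_cons, List.flatMap_map, List.append_assoc]
  rfl

def IsPeakValleySeq (r : ℕ) (ℓ h : ℕ → ℤ) : Prop :=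
  ℓ r = 0 ∧ ∀ i < r, 0 ≤ ℓ i ∧ ℓ i < h (i + 1) ∧ ℓ (i + 1) < h (i + 1)

lemma isPeakValleySeq_zero {ℓ h : ℕ → ℤ} : IsPeakValleySeq 0 ℓ h ↔ ℓ 0 = 0 := by
  simp [IsPeakValleySeq]

lemma isPeakValleySeq_succ {r : ℕ} {ℓ h : ℕ → ℤ} :
    IsPeakValleySeq (r + 1) ℓ h ↔ (0 ≤ ℓ 0 ∧ ℓ 0 < h 1 ∧ ℓ 1 < h 1) ∧
      IsPeakValleySeq r (fun i => ℓ (i + 1)) (fun i => h (i + 1)) := by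
  simp only [IsPeakValleySeq, Nat.forall_lt_succ_left]
  tauto

lemma isPeakValleySeq_iff {r : ℕ} {ℓ h : ℕ → ℤ} (h0 : ℓ 0 = 0) :
    IsPeakValleySeq r ℓ h ↔ (∀ i, 1 ≤ i → i + 1 ≤ r → 0 ≤ ℓ i) ∧ ℓ r = 0 ∧
      (∀ i, 1 ≤ i → i ≤ r → ℓ (i - 1) < h i) ∧ (∀ i, 1 ≤ i → i ≤ r → ℓ i < h i) := by
  constructor
  · rintro ⟨hr, hs⟩
    refine ⟨fun i _ hi => (hs i (by omega)).1, hr, fun i hi hir => ?_, fun i hi hir => ?_⟩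
    · obtain ⟨j, rfl⟩ := Nat.exists_eq_add_of_le' hi
      exact (hs j (by omega)).2.1
    · obtain ⟨j, rfl⟩ := Nat.exists_eq_add_of_le' hi
      exact (hs j (by omega)).2.2
  · rintro ⟨hpos, hr, hup, hdown⟩
    refine ⟨hr, fun i hi => ⟨?_, by simpa using hup (i + 1) (by omega) (by omega),
      hdown (i + 1) (by omega) (by omega)⟩⟩
    rcases i with _ | i
    · exact h0.ge
    · exact hpos _ (by omega) (by omega)

lemma explicitWord_spec {r : ℕ} {ℓ h : ℕ → ℤ} (hs : IsPeakValleySeq r ℓ h) :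
    (explicitWord r ℓ h).head? ≠ some Letter.y ∧ IsCatalanFrom (ℓ 0) (explicitWord r ℓ h) ∧
      (profile (explicitWord r ℓ h)).map (ℓ 0 + ·) = P r ℓ h := by
  induction r generalizing ℓ h with
  | zero =>
    rw [isPeakValleySeq_zero] at hs
    simp [explicitWord, profile_nil, P_zero, isCatalanFrom_nil, hs]
  | succ r ih =>
    obtain ⟨⟨h0, h01, h11⟩, hs⟩ := isPeakValleySeq_succ.1 hs
    obtain ⟨hu, hcat, hprof⟩ := ih hs
    have ha : 0 < (h 1 - ℓ 0).toNat := by omega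
    have hb : 0 < (h 1 - ℓ 1).toNat := by omega
    have hvalley : ℓ 0 + ((h 1 - ℓ 0).toNat : ℤ) - (h 1 - ℓ 1).toNat = ℓ 1 := by omega
    rw [explicitWord_succ, head?_replicate_append ha, isCatalanFrom_xy_append, hvalley,
      profile_xy_append ha hb hu, P_succ]
    refine ⟨by simp, ⟨h0, hcat⟩, ?_⟩
    simp only [List.map_cons, List.map_map, Function.comp_def, add_zero, ← add_assoc,
      ← add_sub_assoc, hvalley]
    rw [hprof]
    congr
    omega

lemma eq_explicitWord_of_profile {r : ℕ} {ℓ h : ℕ → ℤ} {v : List Letter}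
    (hv : v.head? ≠ some Letter.y) (hcat : IsCatalanFrom (ℓ 0) v)
    (hprof : (profile v).map (ℓ 0 + ·) = P r ℓ h) :
    IsPeakValleySeq r ℓ h ∧ v = explicitWord r ℓ h := by
  induction r generalizing ℓ h v with
  | zero =>
    obtain rfl : v = [] := by
      by_contra hne
      obtain ⟨a, b, u, ha, hb, hu, rfl⟩ := exists_eq_xy_append hne hv hcat
      rw [profile_xy_append ha hb hu, P_zero] at hprof
      simp at hprof
    exact ⟨isPeakValleySeq_zero.2 (isCatalanFrom_nil.1 hcat), rfl⟩
  | succ r ih =>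
    have hne : v ≠ [] := by
      rintro rfl
      simp [profile_nil, P_succ] at hprof
    obtain ⟨a, b, u, ha, hb, hu, rfl⟩ := exists_eq_xy_append hne hv hcat
    obtain ⟨h0, hcat⟩ := isCatalanFrom_xy_append.1 hcat
    rw [profile_xy_append ha hb hu, P_succ] at hprof
    simp only [List.map_cons, List.map_map, Function.comp_def, add_zero, List.cons.injEq,
      ← add_assoc, ← add_sub_assoc] at hprof
    obtain ⟨-, hpeak, hrest⟩ := hprof
    have hvalley : ℓ 0 + a - b = ℓ 1 := by
      simpa [head?_profile, head?_P] using congrArg List.head? hrest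
    rw [hvalley] at hcat hrest
    obtain ⟨hs, rfl⟩ := ih (ℓ := fun i => ℓ (i + 1)) (h := fun i => h (i + 1)) hu hcat hrest
    refine ⟨isPeakValleySeq_succ.2 ⟨⟨h0, by omega, by omega⟩, hs⟩, ?_⟩
    rw [explicitWord_succ]
    congr <;> omega

lemma IsCatalan.eq_explicitWord_of_profile_eq {w : List Letter} {r : ℕ} {ℓ h : ℕ → ℤ}
    (hw : IsCatalan w) (hp : profile w = P r ℓ h) :
    ℓ 0 = 0 ∧ IsPeakValleySeq r ℓ h ∧ w = explicitWord r ℓ h := by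
  have h0 : ℓ 0 = 0 := by
    simpa [head?_profile, head?_P, eq_comm] using congrArg List.head? hp
  refine ⟨h0, eq_explicitWord_of_profile hw.head?_ne_y ?_ ?_⟩
  · rwa [h0, isCatalanFrom_zero]
  · simpa [h0] using hp

lemma isCatalan_explicitWord {r : ℕ} {ℓ h : ℕ → ℤ} (h0 : ℓ 0 = 0)
    (hs : IsPeakValleySeq r ℓ h) :
    IsCatalan (explicitWord r ℓ h) ∧ profile (explicitWord r ℓ h) = P r ℓ h := by
  obtain ⟨-, hcat, hp⟩ := explicitWord_spec hs
  rw [h0, isCatalanFrom_zero] at hcat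
  exact ⟨hcat, by simpa [h0] using hp⟩

theorem stmt13 (r : ℕ) (ℓ h : ℕ → ℤ) :
    ((∃ w, IsCatalan w ∧ profile w = P r ℓ h) ↔
      (ℓ 0 = 0 ∧ (∀ i, 1 ≤ i → i + 1 ≤ r → 0 ≤ ℓ i) ∧ ℓ r = 0 ∧
        (∀ i, 1 ≤ i → i ≤ r → ℓ (i - 1) < h i) ∧ (∀ i, 1 ≤ i → i ≤ r → ℓ i < h i)))
    ∧ ∀ w, IsCatalan w → profile w = P r ℓ h → w = explicitWord r ℓ h := by
  refine ⟨⟨fun ⟨w, hw, hp⟩ => ?_, fun ⟨h0, hs⟩ => ?_⟩, fun w hw hp => ?_⟩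
  · obtain ⟨h0, hs, -⟩ := hw.eq_explicitWord_of_profile_eq hp
    exact ⟨h0, (isPeakValleySeq_iff h0).1 hs⟩
  · exact ⟨_, isCatalan_explicitWord h0 ((isPeakValleySeq_iff h0).2 hs)⟩
  · exact (hw.eq_explicitWord_of_profile_eq hp).2.2
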